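/- arXiv:1111.0722 — 5 statements merged into one kernel-verified Lean document; each statement's English description precedes it below -/
import Mathlib

section
/- Let P = [[A,B],[C,D]] ∈ Sp(2k) with both B and C invertible. Then the symmetric matrix M_0(P) = −2[[AᵀC, CᵀB],[BᵀC, BᵀD]] is invertible. -/
open Matrix BigOperators

noncomputable section

/-- The standard symplectic matrix `J = [[0, -I],[I, 0]]`. -/
def Jmat (ι : Type*) [Fintype ι] [DecidableEq ι] : Matrix (ι ⊕ ι) (ι ⊕ ι) ℝ :=
  Matrix.fromBlocks 0 (-1) 1 0

/-- `M` is symplectic iff `Mᵀ J M = J`. -/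
def IsSymplectic {ι : Type*} [Fintype ι] [DecidableEq ι]
    (M : Matrix (ι ⊕ ι) (ι ⊕ ι) ℝ) : Prop :=
  Mᵀ * Jmat ι * M = Jmat ι

/-- The matrix `M_ε(P)`. -/
def Mmat {ι : Type*} [Fintype ι] [DecidableEq ι] (ε : ℝ)
    (P : Matrix (ι ⊕ ι) (ι ⊕ ι) ℝ) : Matrix (ι ⊕ ι) (ι ⊕ ι) ℝ :=
  Pᵀ * Matrix.fromBlocks (Real.sin (2*ε) • 1) (-(Real.cos (2*ε)) • 1)
      (-(Real.cos (2*ε)) • 1) (-(Real.sin (2*ε)) • 1) * P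
    + Matrix.fromBlocks (Real.sin (2*ε) • 1) (Real.cos (2*ε) • 1)
      (Real.cos (2*ε) • 1) (-(Real.sin (2*ε)) • 1)

/-- `N = diag(-I, I)`. -/
def Nmat (ι : Type*) [Fintype ι] [DecidableEq ι] : Matrix (ι ⊕ ι) (ι ⊕ ι) ℝ :=
  Matrix.fromBlocks (-1) 0 0 1

/-- `m⁺(F)`: dimension of a maximal subspace on which the quadratic form of `F`
is positive definite. -/
def posDim {ι : Type*} [Fintype ι] (F : Matrix ι ι ℝ) : ℕ :=
  sSup {d : ℕ | ∃ W : Submodule ℝ (ι → ℝ), Module.finrank ℝ W = d ∧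
    ∀ v ∈ W, v ≠ 0 → 0 < F.mulVec v ⬝ᵥ v}

/-- `m⁻(F)`: dimension of a maximal subspace on which the quadratic form of `F`
is negative definite. -/
def negDim {ι : Type*} [Fintype ι] (F : Matrix ι ι ℝ) : ℕ :=
  sSup {d : ℕ | ∃ W : Submodule ℝ (ι → ℝ), Module.finrank ℝ W = d ∧
    ∀ v ∈ W, v ≠ 0 → F.mulVec v ⬝ᵥ v < 0}

/-- The signature `sgn F = m⁺(F) - m⁻(F)`. -/
def signat {ι : Type*} [Fintype ι] (F : Matrix ι ι ℝ) : ℤ :=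
  (posDim F : ℤ) - (negDim F : ℤ)

/-- The `⋄`-product (symplectic direct sum) of two matrices. -/
def diamond {ι₁ ι₂ : Type*}
    (M₁ : Matrix (ι₁ ⊕ ι₁) (ι₁ ⊕ ι₁) ℝ) (M₂ : Matrix (ι₂ ⊕ ι₂) (ι₂ ⊕ ι₂) ℝ) :
    Matrix ((ι₁ ⊕ ι₂) ⊕ (ι₁ ⊕ ι₂)) ((ι₁ ⊕ ι₂) ⊕ (ι₁ ⊕ ι₂)) ℝ :=
  Matrix.fromBlocks
    (Matrix.fromBlocks (M₁.submatrix Sum.inl Sum.inl) 0 0 (M₂.submatrix Sum.inl Sum.inl))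
    (Matrix.fromBlocks (M₁.submatrix Sum.inl Sum.inr) 0 0 (M₂.submatrix Sum.inl Sum.inr))
    (Matrix.fromBlocks (M₁.submatrix Sum.inr Sum.inl) 0 0 (M₂.submatrix Sum.inr Sum.inl))
    (Matrix.fromBlocks (M₁.submatrix Sum.inr Sum.inr) 0 0 (M₂.submatrix Sum.inr Sum.inr))

end

/-- If `B` and `C` are invertible then `M₀(P)` is invertible. -/
theorem M_zero_invertible {k : ℕ} (A B C D : Matrix (Fin k) (Fin k) ℝ)
    (h : IsSymplectic (Matrix.fromBlocks A B C D))
    (hB : IsUnit B) (hC : IsUnit C) :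
    IsUnit (Mmat 0 (Matrix.fromBlocks A B C D)) := by
  set P := Matrix.fromBlocks A B C D with hP
  have h2 := h
  unfold IsSymplectic Jmat at h2
  rw [hP, fromBlocks_transpose] at h2
  simp only [fromBlocks_multiply, Matrix.mul_zero, Matrix.zero_mul, Matrix.mul_one,
    Matrix.mul_neg, Matrix.neg_mul, Matrix.mul_one, zero_add, add_zero, Matrix.mul_one,
    Matrix.one_mul] at h2
  rw [fromBlocks_inj] at h2
  obtain ⟨e1, e2, e3, e4⟩ := h2
  have key : Mmat 0 P
      = (-2:ℝ) • (Pᵀ * Matrix.fromBlocks C 0 0 B) := by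
    unfold Mmat
    rw [hP, fromBlocks_transpose]
    simp only [mul_zero, Real.sin_zero, Real.cos_zero, zero_smul, one_smul, neg_smul,
      fromBlocks_multiply, Matrix.smul_mul, fromBlocks_smul, Matrix.mul_zero,
      Matrix.zero_mul, Matrix.mul_one, Matrix.one_mul, Matrix.mul_neg, Matrix.neg_mul,
      zero_add, add_zero, neg_zero, fromBlocks_neg, fromBlocks_add]
    have hAC : Cᵀ * A = Aᵀ * C := by rwa [add_neg_eq_zero] at e1
    have hCB : Cᵀ * B = -1 + Aᵀ * D := by rwa [add_neg_eq_iff_eq_add] at e2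
    have hDA : Dᵀ * A = 1 + Bᵀ * C := by rwa [add_neg_eq_iff_eq_add] at e3
    have hDB : Dᵀ * B = Bᵀ * D := by rwa [add_neg_eq_zero] at e4
    rw [fromBlocks_inj]
    refine ⟨?_, ?_, ?_, ?_⟩ <;> simp only [hAC, hCB, hDA, hDB] <;> module
  have hJsq : Jmat (Fin k) * Jmat (Fin k) = -1 := by
    simp [Jmat, fromBlocks_multiply, ← fromBlocks_one, fromBlocks_neg]
  have hJd : (Jmat (Fin k)).det ≠ 0 := by
    intro h0
    have := congrArg Matrix.det hJsq
    rw [Matrix.det_mul, h0, mul_zero, Matrix.det_neg, Matrix.det_one, mul_one] at this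
    exact (pow_ne_zero _ (by norm_num : (-1:ℝ) ≠ 0)) this.symm
  have hPdet : IsUnit P.det := by
    have hd := congrArg Matrix.det h
    rw [Matrix.det_mul, Matrix.det_mul, Matrix.det_transpose] at hd
    rw [isUnit_iff_ne_zero]
    intro h0
    rw [h0, mul_zero] at hd
    exact hJd hd.symm
  rw [key, Matrix.isUnit_iff_isUnit_det, Matrix.det_smul, Matrix.det_mul,
    Matrix.det_transpose, Matrix.det_fromBlocks_zero₁₂]
  exact (IsUnit.pow _ (isUnit_iff_ne_zero.mpr (by norm_num))).mul
    (hPdet.mul (((Matrix.isUnit_iff_isUnit_det _).mp hC).mul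
      ((Matrix.isUnit_iff_isUnit_det _).mp hB)))
end

section
/- Let P = [[A,B],[C,D]] ∈ Sp(2k) and let x ∈ ℝ^k with Bx = 0 and x ≠ 0. Then for the vector v = (0,x) ∈ ℝ^{2k} and any ε with 0 < ε small (specifically sin(2ε) > 0), one has ⟨M_ε(P)v, v⟩ = −sin(2ε)·⟨(DᵀD + I_k)x, x⟩ < 0. -/
open Matrix BigOperators

namespace Matrix

variable {ι : Type*} [Fintype ι]

theorem transpose_mul_mul_mulVec_dotProduct (P S : Matrix ι ι ℝ) (v : ι → ℝ) :
    (Pᵀ * S * P) *ᵥ v ⬝ᵥ v = S *ᵥ (P *ᵥ v) ⬝ᵥ P *ᵥ v := by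
  rw [← mulVec_mulVec, ← mulVec_mulVec, mulVec_transpose, ← dotProduct_mulVec]

theorem fromBlocks_mulVec_sumElim_zero (A B C D : Matrix ι ι ℝ) (y : ι → ℝ) :
    fromBlocks A B C D *ᵥ Sum.elim 0 y = Sum.elim (B *ᵥ y) (D *ᵥ y) := by
  simp [fromBlocks_mulVec]

theorem fromBlocks_mulVec_sumElim_zero_dotProduct (A B C D : Matrix ι ι ℝ) (y : ι → ℝ) :
    fromBlocks A B C D *ᵥ Sum.elim 0 y ⬝ᵥ Sum.elim 0 y = D *ᵥ y ⬝ᵥ y := by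
  simp [fromBlocks_mulVec_sumElim_zero, sumElim_dotProduct_sumElim]

variable [DecidableEq ι]

theorem transpose_mul_self_add_one_mulVec_dotProduct (D : Matrix ι ι ℝ) (x : ι → ℝ) :
    (Dᵀ * D + 1) *ᵥ x ⬝ᵥ x = D *ᵥ x ⬝ᵥ D *ᵥ x + x ⬝ᵥ x := by
  rw [add_mulVec, one_mulVec, add_dotProduct, ← mulVec_mulVec, mulVec_transpose,
    ← dotProduct_mulVec]

theorem transpose_mul_self_add_one_mulVec_dotProduct_pos (D : Matrix ι ι ℝ) {x : ι → ℝ}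
    (hx : x ≠ 0) : 0 < (Dᵀ * D + 1) *ᵥ x ⬝ᵥ x := by
  have hDx : 0 ≤ D *ᵥ x ⬝ᵥ D *ᵥ x := Finset.sum_nonneg fun i _ => mul_self_nonneg _
  have hxx : 0 < x ⬝ᵥ x := by simpa using dotProduct_star_self_pos_iff.mpr hx
  rw [transpose_mul_self_add_one_mulVec_dotProduct]
  positivity

end Matrix

open Matrix in
/-- Since `B x = 0`, `P (0, x) = (0, D x)`, so only the lower right blocks `-sin(2ε) I` of the
two summands of `M_ε(P)` contribute. -/
theorem Mmat_mulVec_sumElim_zero_dotProduct {ι : Type*} [Fintype ι] [DecidableEq ι] (ε : ℝ)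
    (A B C D : Matrix ι ι ℝ) {x : ι → ℝ} (hx : B *ᵥ x = 0) :
    Mmat ε (fromBlocks A B C D) *ᵥ Sum.elim 0 x ⬝ᵥ Sum.elim 0 x =
      -Real.sin (2 * ε) * ((Dᵀ * D + 1) *ᵥ x ⬝ᵥ x) := by
  rw [Mmat, add_mulVec, add_dotProduct, transpose_mul_mul_mulVec_dotProduct,
    fromBlocks_mulVec_sumElim_zero, hx, fromBlocks_mulVec_sumElim_zero_dotProduct,
    fromBlocks_mulVec_sumElim_zero_dotProduct, transpose_mul_self_add_one_mulVec_dotProduct]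
  simp only [smul_mulVec, one_mulVec, smul_dotProduct, smul_eq_mul]
  ring

theorem M_eps_neg_on_kerB_general {k : ℕ} (A B C D : Matrix (Fin k) (Fin k) ℝ)
    (x : Fin k → ℝ) (hx : B.mulVec x = 0) (hx0 : x ≠ 0)
    (ε : ℝ) (hs : 0 < Real.sin (2 * ε)) :
    (Mmat ε (Matrix.fromBlocks A B C D)).mulVec (Sum.elim 0 x) ⬝ᵥ (Sum.elim 0 x) =
      -(Real.sin (2 * ε)) * ((Dᵀ * D + 1).mulVec x ⬝ᵥ x) ∧
    (Mmat ε (Matrix.fromBlocks A B C D)).mulVec (Sum.elim 0 x) ⬝ᵥ (Sum.elim 0 x) < 0 := by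
  have hq := Mmat_mulVec_sumElim_zero_dotProduct ε A B C D hx
  refine ⟨hq, hq ▸ mul_neg_of_neg_of_pos (neg_neg_of_pos hs) ?_⟩
  exact transpose_mul_self_add_one_mulVec_dotProduct_pos D hx0

/-- For `x ∈ ker B`, `x ≠ 0`, and `sin 2ε > 0`, the quadratic form of `M_ε(P)` at
`v = (0, x)` equals `-sin(2ε)⟨(DᵀD+I)x, x⟩ < 0`. -/
theorem M_eps_neg_on_kerB {k : ℕ} (A B C D : Matrix (Fin k) (Fin k) ℝ)
    (h : IsSymplectic (Matrix.fromBlocks A B C D))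
    (x : Fin k → ℝ) (hx : B.mulVec x = 0) (hx0 : x ≠ 0)
    (ε : ℝ) (hε : 0 < ε) (hs : 0 < Real.sin (2 * ε)) :
    (Mmat ε (Matrix.fromBlocks A B C D)).mulVec (Sum.elim 0 x) ⬝ᵥ (Sum.elim 0 x) =
      -(Real.sin (2 * ε)) * ((Dᵀ * D + 1).mulVec x ⬝ᵥ x) ∧
    (Mmat ε (Matrix.fromBlocks A B C D)).mulVec (Sum.elim 0 x) ⬝ᵥ (Sum.elim 0 x) < 0 :=
  M_eps_neg_on_kerB_general A B C D x hx hx0 ε hs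
end

section
/- For b > 0 and 0 < ε sufficiently small, the 2×2 symmetric matrix M_ε(P) with P = [[1, −b],[0, 1]] is positive definite (so sgn M_ε(P) = 2), while for P = [[1, 0],[b, 1]] the matrix M_ε(P) is negative definite (so sgn M_ε(P) = −2). -/
/-!
Both matrices are scalar block matrices `[[α, γ], [γ, δ]] ⊗ I`. With `s = sin 2ε`, `c = cos 2ε`,
the upper shear gives `α = 2s` and the lower one (after negation) `δ = 2s`, and in both cases
`αδ - γ² = s (b² s + 4 (b c - s))`. For `0 < 2ε < arctan b` we have `s > 0` and `tan 2ε < b`,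
i.e. `s < b c`, so both matrices are definite; a definite form on `ℝ²` has `m⁺ = 2`, `m⁻ = 0`.
-/

open Matrix BigOperators

open Matrix Real

section Blocks

variable {ι : Type*} [Fintype ι] [DecidableEq ι]

lemma Mmat_shear_upper (ε b : ℝ) :
    Mmat ε (fromBlocks 1 (-b • 1) 0 1 : Matrix (ι ⊕ ι) (ι ⊕ ι) ℝ) =
      fromBlocks ((2 * sin (2 * ε)) • 1) ((-(b * sin (2 * ε))) • 1)
        ((-(b * sin (2 * ε))) • 1)
        ((b ^ 2 * sin (2 * ε) + 2 * b * cos (2 * ε) - 2 * sin (2 * ε)) • 1) := by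
  simp only [Mmat, fromBlocks_transpose, fromBlocks_multiply, fromBlocks_add, transpose_one,
    transpose_zero, transpose_smul, Matrix.mul_smul, Matrix.mul_one, Matrix.mul_zero]
  congr 1 <;> module

lemma neg_Mmat_shear_lower (ε b : ℝ) :
    -Mmat ε (fromBlocks 1 0 (b • 1) 1 : Matrix (ι ⊕ ι) (ι ⊕ ι) ℝ) =
      fromBlocks ((b ^ 2 * sin (2 * ε) + 2 * b * cos (2 * ε) - 2 * sin (2 * ε)) • 1)
        ((b * sin (2 * ε)) • 1) ((b * sin (2 * ε)) • 1)
        ((2 * sin (2 * ε)) • 1) := by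
  simp only [Mmat, fromBlocks_transpose, fromBlocks_multiply, fromBlocks_add, fromBlocks_neg,
    transpose_one, transpose_zero, transpose_smul, Matrix.mul_smul, Matrix.mul_one, Matrix.mul_zero]
  congr 1 <;> module

lemma binary_quadratic_form_pos {a c d x y : ℝ} (ha : 0 < a) (hdet : 0 < a * d - c ^ 2)
    (hxy : x ≠ 0 ∨ y ≠ 0) : 0 < a * x ^ 2 + 2 * c * x * y + d * y ^ 2 := by
  have hsq : a * (a * x ^ 2 + 2 * c * x * y + d * y ^ 2) =
      (a * x + c * y) ^ 2 + (a * d - c ^ 2) * y ^ 2 := by ring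
  refine pos_of_mul_pos_right (hsq ▸ ?_) ha.le
  rcases hxy with hx | hy
  · by_cases hy : y = 0
    · subst hy; simp [sq_pos_of_ne_zero, ha.ne', hx]
    · positivity
  · positivity

lemma binary_quadratic_form_nonneg {a c d : ℝ} (ha : 0 < a) (hdet : 0 < a * d - c ^ 2)
    (x y : ℝ) : 0 ≤ a * x ^ 2 + 2 * c * x * y + d * y ^ 2 := by
  by_cases h : x = 0 ∧ y = 0
  · simp [h.1, h.2]
  · exact (binary_quadratic_form_pos ha hdet (not_and_or.mp h)).le

lemma posDef_fromBlocks_smul_one {a c d : ℝ} (ha : 0 < a) (hdet : 0 < a * d - c ^ 2) :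
    (fromBlocks (a • 1) (c • 1) (c • 1) (d • 1) : Matrix (ι ⊕ ι) (ι ⊕ ι) ℝ).PosDef := by
  rw [Matrix.posDef_iff_dotProduct_mulVec]
  refine ⟨by simp [IsHermitian, fromBlocks_transpose], fun v hv => ?_⟩
  have hform : star v ⬝ᵥ fromBlocks (a • 1) (c • 1) (c • 1) (d • 1) *ᵥ v = ∑ i,
      (a * v (.inl i) ^ 2 + 2 * c * v (.inl i) * v (.inr i) + d * v (.inr i) ^ 2) := by
    rw [← Sum.elim_comp_inl_inr v, fromBlocks_mulVec]
    simp only [dotProduct, Sum.elim_comp_inl_inr, Pi.star_apply, star_trivial, smul_mulVec,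
      one_mulVec, Fintype.sum_sum_type, Sum.elim_inl, Pi.add_apply, Pi.smul_apply,
      Function.comp_apply, smul_eq_mul, Sum.elim_inr, ← Finset.sum_add_distrib]
    exact Finset.sum_congr rfl fun i _ => by ring
  obtain ⟨j, hj⟩ := Function.ne_iff.mp hv
  rw [hform]
  refine Finset.sum_pos' (fun i _ => binary_quadratic_form_nonneg ha hdet _ _) ?_
  rcases j with i | i
  · exact ⟨i, Finset.mem_univ _, binary_quadratic_form_pos ha hdet (.inl hj)⟩
  · exact ⟨i, Finset.mem_univ _, binary_quadratic_form_pos ha hdet (.inr hj)⟩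

end Blocks

section Signature

variable {ι : Type*} [Fintype ι]

lemma Matrix.PosDef.mulVec_dotProduct_pos {F : Matrix ι ι ℝ} (hF : F.PosDef) {v : ι → ℝ}
    (hv : v ≠ 0) : 0 < F *ᵥ v ⬝ᵥ v := by
  simpa [dotProduct_comm] using hF.dotProduct_mulVec_pos hv

lemma posDim_of_posDef {F : Matrix ι ι ℝ} (hF : F.PosDef) : posDim F = Fintype.card ι := by
  have hmem : Fintype.card ι ∈ {d : ℕ | ∃ W : Submodule ℝ (ι → ℝ), Module.finrank ℝ W = d ∧
      ∀ v ∈ W, v ≠ 0 → 0 < F *ᵥ v ⬝ᵥ v} :=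
    ⟨⊤, by simp, fun v _ hv => hF.mulVec_dotProduct_pos hv⟩
  have hle : ∀ d ∈ {d : ℕ | ∃ W : Submodule ℝ (ι → ℝ), Module.finrank ℝ W = d ∧
      ∀ v ∈ W, v ≠ 0 → 0 < F *ᵥ v ⬝ᵥ v}, d ≤ Fintype.card ι := by
    rintro d ⟨W, rfl, -⟩
    simpa using Submodule.finrank_le W
  exact le_antisymm (csSup_le' hle) (le_csSup ⟨_, hle⟩ hmem)

lemma negDim_of_posDef {F : Matrix ι ι ℝ} (hF : F.PosDef) : negDim F = 0 := by
  refine Nat.eq_zero_of_le_zero (csSup_le' ?_)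
  rintro d ⟨W, rfl, hneg⟩
  by_contra hW
  obtain ⟨v, hvW, hv⟩ := W.ne_bot_iff.mp fun h => hW (by simp [h])
  exact (hneg v hvW hv).not_gt (hF.mulVec_dotProduct_pos hv)

lemma posDim_neg (F : Matrix ι ι ℝ) : posDim (-F) = negDim F := by
  simp only [posDim, negDim, neg_mulVec, neg_dotProduct, neg_pos]

lemma negDim_neg (F : Matrix ι ι ℝ) : negDim (-F) = posDim F := by
  simp only [posDim, negDim, neg_mulVec, neg_dotProduct, neg_lt_zero]

lemma signat_of_posDef {F : Matrix ι ι ℝ} (hF : F.PosDef) : signat F = Fintype.card ι := by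
  simp [signat, posDim_of_posDef hF, negDim_of_posDef hF]

lemma signat_of_neg_posDef {F : Matrix ι ι ℝ} (hF : (-F).PosDef) :
    signat F = -Fintype.card ι := by
  rw [signat, ← posDim_neg, ← negDim_neg, posDim_of_posDef hF, negDim_of_posDef hF]
  simp

end Signature

lemma Real.sin_lt_mul_cos_of_lt_arctan {x b : ℝ} (hx : -(π / 2) < x) (hxb : x < arctan b) :
    sin x < b * cos x := by
  have hcos : 0 < cos x := cos_pos_of_mem_Ioo ⟨hx, hxb.trans (arctan_lt_pi_div_two b)⟩
  have htan : tan x < b := by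
    simpa using tan_lt_tan_of_lt_of_lt_pi_div_two hx (arctan_lt_pi_div_two b) hxb
  rwa [tan_eq_sin_div_cos, div_lt_iff₀ hcos] at htan

/-- For `b > 0` and small `ε > 0`, `M_ε([[1,-b],[0,1]])` is positive definite with
signature `2`, and `M_ε([[1,0],[b,1]])` is negative definite with signature `-2`. -/
theorem signature_shear (b : ℝ) (hb : 0 < b) :
    ∃ ε₀ > 0, ∀ ε : ℝ, 0 < ε → ε < ε₀ →
      (Mmat ε (Matrix.fromBlocks 1 (-b • 1) 0 1 :
        Matrix (Fin 1 ⊕ Fin 1) (Fin 1 ⊕ Fin 1) ℝ)).PosDef ∧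
      signat (Mmat ε (Matrix.fromBlocks 1 (-b • 1) 0 1 :
        Matrix (Fin 1 ⊕ Fin 1) (Fin 1 ⊕ Fin 1) ℝ)) = 2 ∧
      (-(Mmat ε (Matrix.fromBlocks 1 0 (b • 1) 1 :
        Matrix (Fin 1 ⊕ Fin 1) (Fin 1 ⊕ Fin 1) ℝ))).PosDef ∧
      signat (Mmat ε (Matrix.fromBlocks 1 0 (b • 1) 1 :
        Matrix (Fin 1 ⊕ Fin 1) (Fin 1 ⊕ Fin 1) ℝ)) = -2 := by
  refine ⟨arctan b / 2, by simp [arctan_pos, hb], fun ε hε hεb => ?_⟩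
  have h2ε : 2 * ε < arctan b := by linarith
  have hsin : 0 < sin (2 * ε) := sin_pos_of_pos_of_lt_pi (by linarith)
    (by linarith [arctan_lt_pi_div_two b, pi_pos])
  have hsin_lt : sin (2 * ε) < b * cos (2 * ε) :=
    Real.sin_lt_mul_cos_of_lt_arctan (by linarith [pi_pos]) h2ε
  have hb2sin : 0 < b ^ 2 * sin (2 * ε) := by positivity
  have hkey : 0 < b ^ 2 * sin (2 * ε) + 4 * (b * cos (2 * ε) - sin (2 * ε)) := by linarith
  have hupper : (Mmat ε (fromBlocks 1 (-b • 1) 0 1 :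
      Matrix (Fin 1 ⊕ Fin 1) (Fin 1 ⊕ Fin 1) ℝ)).PosDef := by
    rw [Mmat_shear_upper]
    exact posDef_fromBlocks_smul_one (by linarith) (by linear_combination mul_pos hsin hkey)
  have hlower : (-Mmat ε (fromBlocks 1 0 (b • 1) 1 :
      Matrix (Fin 1 ⊕ Fin 1) (Fin 1 ⊕ Fin 1) ℝ)).PosDef := by
    rw [neg_Mmat_shear_lower]
    exact posDef_fromBlocks_smul_one (by linarith) (by linear_combination mul_pos hsin hkey)
  refine ⟨hupper, ?_, hlower, ?_⟩
  · rw [signat_of_posDef hupper]; simp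
  · rw [signat_of_neg_posDef hlower]; simp
end

section
/- For b > 0 and 0 < ε sufficiently small, the 2×2 matrices P = ±[[1, b],[0, 1]] and P = ±[[1, 0],[−b, 1]] satisfy sgn M_ε(P) = 0. -/
open Matrix BigOperators

/-!
On a plane, a quadratic form that takes a positive and a negative value has `m⁺ = m⁻ = 1`, hence
signature `0`. With `s = sin 2ε`, `c = cos 2ε`, the form of `M_ε(P)` for the upper shear is `2s > 0` on
the first basis vector and `s b² - 2bc - 2s` on the second; for the lower shear it is
`2s + 2bc - s b²` and `-2s`. The two values involving `b` have the required signs as soon as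
`b tan 2ε < 1`, and `M_ε(-P) = M_ε(P)`.
-/

open Real

section Signature

variable {ι : Type*} [Fintype ι]

lemma mulVec_smul_dotProduct_smul (F : Matrix ι ι ℝ) (a : ℝ) (v : ι → ℝ) :
    F *ᵥ (a • v) ⬝ᵥ (a • v) = a ^ 2 * (F *ᵥ v ⬝ᵥ v) := by
  rw [mulVec_smul, smul_dotProduct, dotProduct_smul, smul_eq_mul, smul_eq_mul]
  ring

lemma bddAbove_finrank_submodule (p : Submodule ℝ (ι → ℝ) → Prop) :
    BddAbove {d : ℕ | ∃ W : Submodule ℝ (ι → ℝ), Module.finrank ℝ W = d ∧ p W} := by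
  refine ⟨Fintype.card ι, ?_⟩
  rintro d ⟨W, rfl, -⟩
  simpa using Submodule.finrank_le W

lemma exists_finrank_eq_posDim (F : Matrix ι ι ℝ) :
    ∃ W : Submodule ℝ (ι → ℝ), Module.finrank ℝ W = posDim F ∧
      ∀ v ∈ W, v ≠ 0 → 0 < F *ᵥ v ⬝ᵥ v := by
  refine Nat.sSup_mem ?_ (bddAbove_finrank_submodule _)
  exact ⟨0, ⊥, finrank_bot ℝ _, fun v hv hv0 => absurd ((Submodule.mem_bot ℝ).1 hv) hv0⟩

lemma one_le_posDim {F : Matrix ι ι ℝ} {v : ι → ℝ} (hv : 0 < F *ᵥ v ⬝ᵥ v) :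
    1 ≤ posDim F := by
  have hv0 : v ≠ 0 := by rintro rfl; simp at hv
  refine le_csSup (bddAbove_finrank_submodule _) ?_
  refine ⟨ℝ ∙ v, finrank_span_singleton hv0, ?_⟩
  rintro x hx hx0
  obtain ⟨a, rfl⟩ := Submodule.mem_span_singleton.mp hx
  have ha : a ≠ 0 := by rintro rfl; simp at hx0
  rw [mulVec_smul_dotProduct_smul]
  positivity

lemma posDim_lt_card {F : Matrix ι ι ℝ} {w : ι → ℝ} (hw0 : w ≠ 0)
    (hw : F *ᵥ w ⬝ᵥ w ≤ 0) : posDim F < Fintype.card ι := by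
  obtain ⟨W, hW, hpos⟩ := exists_finrank_eq_posDim F
  have hle : posDim F ≤ Fintype.card ι := by
    simpa [← hW] using Submodule.finrank_le W
  refine lt_of_le_of_ne hle fun hcard => (hpos w ?_ hw0).not_ge hw
  have hW_top : W = ⊤ := Submodule.eq_top_of_finrank_eq (by simpa [hW] using hcard)
  exact hW_top ▸ Submodule.mem_top

lemma negDim_eq_posDim_neg (F : Matrix ι ι ℝ) : negDim F = posDim (-F) := by
  simp only [negDim, posDim, neg_mulVec, neg_dotProduct, neg_pos]

lemma signat_eq_zero_of_card_eq_two (hι : Fintype.card ι = 2) {F : Matrix ι ι ℝ}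
    {v w : ι → ℝ} (hv : 0 < F *ᵥ v ⬝ᵥ v) (hw : F *ᵥ w ⬝ᵥ w < 0) : signat F = 0 := by
  have hv0 : v ≠ 0 := by rintro rfl; simp at hv
  have hw0 : w ≠ 0 := by rintro rfl; simp at hw
  have hneg_w : 0 < (-F) *ᵥ w ⬝ᵥ w := by simpa [neg_mulVec] using hw
  have hneg_v : (-F) *ᵥ v ⬝ᵥ v ≤ 0 := by simpa [neg_mulVec] using hv.le
  have hpos := one_le_posDim hv
  have hpos' := posDim_lt_card hw0 hw.le
  have hneg := one_le_posDim hneg_w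
  have hneg' := posDim_lt_card hv0 hneg_v
  rw [signat, negDim_eq_posDim_neg]
  omega

end Signature

lemma Mmat_neg {ι : Type*} [Fintype ι] [DecidableEq ι] (ε : ℝ) (P : Matrix (ι ⊕ ι) (ι ⊕ ι) ℝ) :
    Mmat ε (-P) = Mmat ε P := by
  simp only [Mmat, transpose_neg, neg_mul, mul_neg, neg_neg]

lemma mul_sin_lt_cos_of_lt_arctan_inv {b θ : ℝ} (hb : 0 < b) (hθ : 0 ≤ θ)
    (hθb : θ < arctan b⁻¹) : b * sin θ < cos θ := by
  have hθπ : θ < π / 2 := hθb.trans (arctan_lt_pi_div_two _)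
  have hcos : 0 < cos θ := cos_pos_of_mem_Ioo ⟨by linarith [pi_pos], hθπ⟩
  have htan : tan θ < b⁻¹ := by
    simpa using tan_lt_tan_of_nonneg_of_lt_pi_div_two hθ (arctan_lt_pi_div_two _) hθb
  rw [tan_eq_sin_div_cos, div_lt_iff₀ hcos] at htan
  calc b * sin θ < b * (b⁻¹ * cos θ) := mul_lt_mul_of_pos_left htan hb
    _ = cos θ := by field_simp

local notation "e₁" => (Pi.single (Sum.inl 0) 1 : Fin 1 ⊕ Fin 1 → ℝ)
local notation "e₂" => (Pi.single (Sum.inr 0) 1 : Fin 1 ⊕ Fin 1 → ℝ)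

section Shear

variable (ε b : ℝ)

lemma quadForm_Mmat_upperShear_e₁ :
    Mmat ε (fromBlocks 1 (b • 1) 0 1 : Matrix (Fin 1 ⊕ Fin 1) (Fin 1 ⊕ Fin 1) ℝ) *ᵥ e₁ ⬝ᵥ e₁
      = 2 * sin (2 * ε) := by
  simp [Mmat, mul_apply, Fintype.sum_sum_type]
  ring

lemma quadForm_Mmat_upperShear_e₂ :
    Mmat ε (fromBlocks 1 (b • 1) 0 1 : Matrix (Fin 1 ⊕ Fin 1) (Fin 1 ⊕ Fin 1) ℝ) *ᵥ e₂ ⬝ᵥ e₂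
      = sin (2 * ε) * b ^ 2 - 2 * b * cos (2 * ε) - 2 * sin (2 * ε) := by
  simp [Mmat, mul_apply, Fintype.sum_sum_type]
  ring

lemma quadForm_Mmat_lowerShear_e₁ :
    Mmat ε (fromBlocks 1 0 (-b • 1) 1 : Matrix (Fin 1 ⊕ Fin 1) (Fin 1 ⊕ Fin 1) ℝ) *ᵥ e₁ ⬝ᵥ e₁
      = 2 * sin (2 * ε) + 2 * b * cos (2 * ε) - sin (2 * ε) * b ^ 2 := by
  simp [Mmat, mul_apply, Fintype.sum_sum_type]
  ring

lemma quadForm_Mmat_lowerShear_e₂ :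
    Mmat ε (fromBlocks 1 0 (-b • 1) 1 : Matrix (Fin 1 ⊕ Fin 1) (Fin 1 ⊕ Fin 1) ℝ) *ᵥ e₂ ⬝ᵥ e₂
      = -(2 * sin (2 * ε)) := by
  simp [Mmat, mul_apply, Fintype.sum_sum_type]
  ring

end Shear

/-- For `b > 0` and small `ε > 0`, `sgn M_ε(P) = 0` for
`P = ±[[1,b],[0,1]]` and `P = ±[[1,0],[-b,1]]`. -/
theorem signature_shear_zero (b : ℝ) (hb : 0 < b) :
    ∃ ε₀ > 0, ∀ ε : ℝ, 0 < ε → ε < ε₀ →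
      signat (Mmat ε (Matrix.fromBlocks 1 (b • 1) 0 1 :
        Matrix (Fin 1 ⊕ Fin 1) (Fin 1 ⊕ Fin 1) ℝ)) = 0 ∧
      signat (Mmat ε (-(Matrix.fromBlocks 1 (b • 1) 0 1) :
        Matrix (Fin 1 ⊕ Fin 1) (Fin 1 ⊕ Fin 1) ℝ)) = 0 ∧
      signat (Mmat ε (Matrix.fromBlocks 1 0 (-b • 1) 1 :
        Matrix (Fin 1 ⊕ Fin 1) (Fin 1 ⊕ Fin 1) ℝ)) = 0 ∧
      signat (Mmat ε (-(Matrix.fromBlocks 1 0 (-b • 1) 1) :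
        Matrix (Fin 1 ⊕ Fin 1) (Fin 1 ⊕ Fin 1) ℝ)) = 0 := by
  have harctan : 0 < arctan b⁻¹ := arctan_pos.2 (inv_pos.2 hb)
  refine ⟨arctan b⁻¹ / 2, half_pos harctan, fun ε hε hεε₀ => ?_⟩
  have hsin : 0 < sin (2 * ε) := sin_pos_of_pos_of_lt_pi (by linarith)
    (by linarith [arctan_lt_pi_div_two b⁻¹, pi_pos])
  have hsmall : b * sin (2 * ε) < cos (2 * ε) :=
    mul_sin_lt_cos_of_lt_arctan_inv hb (by linarith) (by linarith)
  have hsmall_mul : b * (b * sin (2 * ε)) < b * cos (2 * ε) := mul_lt_mul_of_pos_left hsmall hb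
  have hcard : Fintype.card (Fin 1 ⊕ Fin 1) = 2 := rfl
  have hupper : signat (Mmat ε (fromBlocks 1 (b • 1) 0 1 :
      Matrix (Fin 1 ⊕ Fin 1) (Fin 1 ⊕ Fin 1) ℝ)) = 0 :=
    signat_eq_zero_of_card_eq_two hcard (v := e₁) (w := e₂)
      (by rw [quadForm_Mmat_upperShear_e₁]; positivity)
      (by rw [quadForm_Mmat_upperShear_e₂]; nlinarith)
  have hlower : signat (Mmat ε (fromBlocks 1 0 (-b • 1) 1 :
      Matrix (Fin 1 ⊕ Fin 1) (Fin 1 ⊕ Fin 1) ℝ)) = 0 :=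
    signat_eq_zero_of_card_eq_two hcard (v := e₁) (w := e₂)
      (by rw [quadForm_Mmat_lowerShear_e₁]; nlinarith)
      (by rw [quadForm_Mmat_lowerShear_e₂]; linarith)
  rw [Mmat_neg, Mmat_neg]
  exact ⟨hupper, hupper, hlower, hlower⟩
end

section
/- Let P = [[A,B],[C,D]] ∈ Sp(2k) and suppose the k×k symmetric matrix AᵀC has a positive definite subspace of dimension q. Then for all ε with |ε| sufficiently small, the symmetric matrix M_ε(P) has at least q negative eigenvalues; hence (1/2)·sgn M_ε(P) ≤ k − q. -/
open Matrix BigOperators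

/-!
On vectors `(x, 0)` the quadratic form of `M_ε(P)` equals
`sin 2ε · (|Ax|² - |Cx|² + |x|²) - 2 cos 2ε · ⟨Ax, Cx⟩`. On the unit sphere of `W` the
ratio of the first bracket to `⟨Ax, Cx⟩ = ⟨AᵀCx, x⟩ > 0` is bounded by compactness, so for
small `|ε|` the cosine term wins and `M_ε(P)` is negative definite on the `q`-dimensional
image of `W`. A negative definite subspace of dimension `q` forces `m⁻ ≥ q` and, being
disjoint from every positive definite subspace, `m⁺ ≤ 2k - q`.
-/

open Module Filter Topology Real

section HomogeneousBound

variable {E : Type*} [NormedAddCommGroup E] [NormedSpace ℝ E] [FiniteDimensional ℝ E]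
  {f g : E → ℝ}

lemma exists_abs_le_mul_of_homogeneous (hf : Continuous f) (hg : Continuous g)
    (hf₂ : ∀ (c : ℝ) x, f (c • x) = c ^ 2 * f x) (hg₂ : ∀ (c : ℝ) x, g (c • x) = c ^ 2 * g x)
    (hpos : ∀ x, x ≠ 0 → 0 < f x) :
    ∃ c, ∀ x, |g x| ≤ c * f x := by
  have hS : ∀ u ∈ Metric.sphere (0 : E) 1, 0 < f u := fun u hu =>
    hpos u (Metric.ne_of_mem_sphere hu one_ne_zero)
  obtain ⟨c, hc⟩ := (isCompact_sphere (0 : E) 1).bddAbove_image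
    (hg.abs.continuousOn.div hf.continuousOn fun u hu => (hS u hu).ne')
  refine ⟨c, fun x => ?_⟩
  rcases eq_or_ne x 0 with rfl | hx
  · simp [show f 0 = 0 by simpa using hf₂ 0 0, show g 0 = 0 by simpa using hg₂ 0 0]
  set r := ‖x‖
  have hr : 0 < r := norm_pos_iff.2 hx
  have hu : r⁻¹ • x ∈ Metric.sphere (0 : E) 1 := by
    simp [r, norm_smul, hr.ne']
  have hux : x = r • r⁻¹ • x := by rw [smul_smul, mul_inv_cancel₀ hr.ne', one_smul]
  have hcu : |g (r⁻¹ • x)| ≤ c * f (r⁻¹ • x) :=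
    (div_le_iff₀ (hS _ hu)).1 (hc ⟨_, hu, rfl⟩)
  rw [hux, hf₂, hg₂, abs_mul, abs_of_nonneg (sq_nonneg r)]
  linarith [mul_le_mul_of_nonneg_left hcu (sq_nonneg r)]

lemma eventually_mul_abs_sin_lt_two_mul_cos (c : ℝ) :
    ∀ᶠ ε in 𝓝 (0 : ℝ), c * |sin (2 * ε)| < 2 * cos (2 * ε) :=
  ContinuousAt.eventually_lt (by fun_prop) (by fun_prop) (by simp)

lemma exists_sin_mul_sub_two_cos_mul_neg (hf : Continuous f) (hg : Continuous g)
    (hf₂ : ∀ (c : ℝ) x, f (c • x) = c ^ 2 * f x) (hg₂ : ∀ (c : ℝ) x, g (c • x) = c ^ 2 * g x)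
    (hpos : ∀ x, x ≠ 0 → 0 < f x) :
    ∃ ε₀ > 0, ∀ ε : ℝ, |ε| < ε₀ → ∀ x, x ≠ 0 →
      sin (2 * ε) * g x - 2 * cos (2 * ε) * f x < 0 := by
  obtain ⟨c, hc⟩ := exists_abs_le_mul_of_homogeneous hf hg hf₂ hg₂ hpos
  obtain ⟨ε₀, hε₀, hsmall⟩ :=
    Metric.eventually_nhds_iff.1 (eventually_mul_abs_sin_lt_two_mul_cos c)
  refine ⟨ε₀, hε₀, fun ε hε x hx => ?_⟩
  have hfx := hpos x hx
  have hcos : c * |sin (2 * ε)| < 2 * cos (2 * ε) := hsmall (by simpa [Real.dist_eq] using hε)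
  have hsin : sin (2 * ε) * g x ≤ c * |sin (2 * ε)| * f x :=
    calc sin (2 * ε) * g x ≤ |sin (2 * ε)| * |g x| := by rw [← abs_mul]; exact le_abs_self _
      _ ≤ |sin (2 * ε)| * (c * f x) := by gcongr; exact hc x
      _ = c * |sin (2 * ε)| * f x := by ring
  nlinarith

end HomogeneousBound

section Index

variable {ι : Type*} [Fintype ι]

lemma finrank_add_le_card_of_posDef_of_negDef (F : Matrix ι ι ℝ) {U V : Submodule ℝ (ι → ℝ)}
    (hU : ∀ v ∈ U, v ≠ 0 → 0 < F *ᵥ v ⬝ᵥ v) (hV : ∀ v ∈ V, v ≠ 0 → F *ᵥ v ⬝ᵥ v < 0) :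
    finrank ℝ U + finrank ℝ V ≤ Fintype.card ι := by
  have hdisj : Disjoint U V := by
    rw [Submodule.disjoint_def]
    intro v hvU hvV
    by_contra hv
    exact (hU v hvU hv).not_gt (hV v hvV hv)
  simpa using Submodule.finrank_add_finrank_le_of_disjoint hdisj

lemma finrank_le_negDim (F : Matrix ι ι ℝ) {V : Submodule ℝ (ι → ℝ)}
    (hV : ∀ v ∈ V, v ≠ 0 → F *ᵥ v ⬝ᵥ v < 0) : finrank ℝ V ≤ negDim F :=
  le_csSup ⟨Fintype.card ι, by rintro d ⟨U, rfl, -⟩; simpa using Submodule.finrank_le U⟩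
    ⟨V, rfl, hV⟩

lemma posDim_add_finrank_le_card (F : Matrix ι ι ℝ) {V : Submodule ℝ (ι → ℝ)}
    (hV : ∀ v ∈ V, v ≠ 0 → F *ᵥ v ⬝ᵥ v < 0) : posDim F + finrank ℝ V ≤ Fintype.card ι := by
  have hle : posDim F ≤ Fintype.card ι - finrank ℝ V :=
    csSup_le ⟨0, ⊥, finrank_bot ℝ _, fun v hv hv0 => absurd hv hv0⟩ fun d ⟨U, hUd, hU⟩ => by
      have := finrank_add_le_card_of_posDef_of_negDef F hU hV
      omega
  have : finrank ℝ V ≤ Fintype.card ι := by simpa using Submodule.finrank_le V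
  omega

lemma signat_le_card_sub_two_mul_finrank (F : Matrix ι ι ℝ) {V : Submodule ℝ (ι → ℝ)}
    (hV : ∀ v ∈ V, v ≠ 0 → F *ᵥ v ⬝ᵥ v < 0) :
    signat F ≤ Fintype.card ι - 2 * finrank ℝ V := by
  have h₁ := posDim_add_finrank_le_card F hV
  have h₂ := finrank_le_negDim F hV
  unfold signat
  omega

end Index

section Embedding

variable {ι : Type*}

abbrev inlVec : (ι → ℝ) →ₗ[ℝ] (ι ⊕ ι → ℝ) :=
  (LinearEquiv.sumArrowLequivProdArrow ι ι ℝ ℝ).symm.toLinearMap ∘ₗ LinearMap.inl ℝ _ _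

lemma inlVec_apply (x : ι → ℝ) : inlVec x = Sum.elim x 0 := by
  ext (i | i) <;> rfl

lemma inlVec_injective : Function.Injective (inlVec (ι := ι)) := fun x y h => by
  ext i
  simpa [inlVec_apply] using congrFun h (Sum.inl i)

end Embedding

lemma transpose_mul_mulVec_dotProduct {m n o : Type*} [Fintype m] [Fintype n] [Fintype o]
    (P : Matrix m n ℝ) (N : Matrix m o ℝ) (x : o → ℝ) (y : n → ℝ) :
    (Pᵀ * N) *ᵥ x ⬝ᵥ y = N *ᵥ x ⬝ᵥ P *ᵥ y := by
  rw [← mulVec_mulVec, dotProduct_comm, dotProduct_transpose_mulVec]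

section Mmat

variable {ι : Type*} [Fintype ι] [DecidableEq ι]

lemma Mmat_fromBlocks_mulVec_sumElim_zero_dotProduct (ε : ℝ) (A B C D : Matrix ι ι ℝ)
    (x : ι → ℝ) :
    Mmat ε (fromBlocks A B C D) *ᵥ Sum.elim x 0 ⬝ᵥ Sum.elim x 0 =
      sin (2 * ε) * (A *ᵥ x ⬝ᵥ A *ᵥ x - C *ᵥ x ⬝ᵥ C *ᵥ x + x ⬝ᵥ x)
        - 2 * cos (2 * ε) * (A *ᵥ x ⬝ᵥ C *ᵥ x) := by
  have hPx : fromBlocks A B C D *ᵥ Sum.elim x 0 = Sum.elim (A *ᵥ x) (C *ᵥ x) := by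
    simp [fromBlocks_mulVec]
  rw [Mmat, add_mulVec, add_dotProduct, ← mulVec_mulVec, transpose_mul_mulVec_dotProduct, hPx]
  simp only [fromBlocks_mulVec, smul_mulVec, one_mulVec, Sum.elim_comp_inl, Sum.elim_comp_inr,
    smul_zero, add_zero, sumElim_dotProduct_sumElim, smul_dotProduct, add_dotProduct,
    smul_eq_mul, dotProduct_zero, dotProduct_comm (C *ᵥ x) (A *ᵥ x)]
  ring

lemma exists_Mmat_negDef_on_map_inlVec (A B C D : Matrix ι ι ℝ) (W : Submodule ℝ (ι → ℝ))
    (hpos : ∀ x ∈ W, x ≠ 0 → 0 < (Aᵀ * C) *ᵥ x ⬝ᵥ x) :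
    ∃ ε₀ > 0, ∀ ε : ℝ, |ε| < ε₀ → ∀ v ∈ W.map inlVec, v ≠ 0 →
      Mmat ε (fromBlocks A B C D) *ᵥ v ⬝ᵥ v < 0 := by
  have hAC : ∀ x, (Aᵀ * C) *ᵥ x ⬝ᵥ x = A *ᵥ x ⬝ᵥ C *ᵥ x := fun x => by
    rw [transpose_mul_mulVec_dotProduct, dotProduct_comm]
  obtain ⟨ε₀, hε₀, hneg⟩ := exists_sin_mul_sub_two_cos_mul_neg
    (f := fun x : W => A *ᵥ x ⬝ᵥ C *ᵥ x)
    (g := fun x : W => A *ᵥ x ⬝ᵥ A *ᵥ x - C *ᵥ x ⬝ᵥ C *ᵥ x + (x : ι → ℝ) ⬝ᵥ x)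
    (by fun_prop) (by fun_prop)
    (fun c x => by simp only [Submodule.coe_smul, mulVec_smul, smul_dotProduct, dotProduct_smul,
      smul_eq_mul]; ring)
    (fun c x => by simp only [Submodule.coe_smul, mulVec_smul, smul_dotProduct, dotProduct_smul,
      smul_eq_mul]; ring)
    (fun x hx => by rw [← hAC]; exact hpos x x.2 (by simpa using hx))
  refine ⟨ε₀, hε₀, fun ε hε v ⟨x, hxW, hxv⟩ hv => ?_⟩
  subst hxv
  rw [inlVec_apply, Mmat_fromBlocks_mulVec_sumElim_zero_dotProduct]
  exact hneg ε hε ⟨x, hxW⟩ (by rintro ⟨⟩; simp at hv)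

end Mmat

theorem neg_index_ge_posdef_dim_general {k q : ℕ} (A B C D : Matrix (Fin k) (Fin k) ℝ)
    (W : Submodule ℝ (Fin k → ℝ)) (hW : Module.finrank ℝ W = q)
    (hpos : ∀ x ∈ W, x ≠ 0 → 0 < (Aᵀ * C).mulVec x ⬝ᵥ x) :
    ∃ ε₀ > 0, ∀ ε : ℝ, |ε| < ε₀ →
      q ≤ negDim (Mmat ε (Matrix.fromBlocks A B C D)) ∧
      signat (Mmat ε (Matrix.fromBlocks A B C D)) ≤ 2 * ((k : ℤ) - q) := by
  obtain ⟨ε₀, hε₀, hneg⟩ := exists_Mmat_negDef_on_map_inlVec A B C D W hpos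
  refine ⟨ε₀, hε₀, fun ε hε => ?_⟩
  have hrank : finrank ℝ (W.map inlVec) = q :=
    (Submodule.equivMapOfInjective _ inlVec_injective W).finrank_eq.symm.trans hW
  refine ⟨hrank ▸ finrank_le_negDim _ (hneg ε hε), ?_⟩
  have := signat_le_card_sub_two_mul_finrank _ (hneg ε hε)
  rw [hrank] at this
  simp only [Fintype.card_sum, Fintype.card_fin] at this
  push_cast at this
  linarith

/-- If `AᵀC` is positive definite on a subspace of dimension `q`, then for `|ε|`
small `m⁻(M_ε(P)) ≥ q`, hence `(1/2) sgn M_ε(P) ≤ k - q`. -/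
theorem neg_index_ge_posdef_dim {k q : ℕ} (A B C D : Matrix (Fin k) (Fin k) ℝ)
    (h : IsSymplectic (Matrix.fromBlocks A B C D))
    (W : Submodule ℝ (Fin k → ℝ)) (hW : Module.finrank ℝ W = q)
    (hpos : ∀ x ∈ W, x ≠ 0 → 0 < (Aᵀ * C).mulVec x ⬝ᵥ x) :
    ∃ ε₀ > 0, ∀ ε : ℝ, |ε| < ε₀ →
      q ≤ negDim (Mmat ε (Matrix.fromBlocks A B C D)) ∧
      signat (Mmat ε (Matrix.fromBlocks A B C D)) ≤ 2 * ((k : ℤ) - q) :=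
  neg_index_ge_posdef_dim_general A B C D W hW hpos
end
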